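/- Let g be a finite-dimensional Lie algebra over a p-adic local field L with basis x_1,...,x_d with integral structure constants. Equip the Chevalley–Eilenberg complex U^• = U(g) ⊗_L Λ^•g with the norms ||Σ_q Σ_{I∈I_q} u_I ⊗ x_I||_r = sup_q r^q sup_{I∈I_q} ||u_I||_r (where I_q ranges over strictly increasing index tuples of length q and x_I = x_{i_1}∧...∧x_{i_q}). Then the Chevalley–Eilenberg differential ∂ = ψ + φ is norm-decreasing: ||∂λ||_r ≤ ||λ||_r for all λ ∈ U^• and all r > 1. -/

import Mathlib

/-!
The components of `∂λ` at an index set `J` are built from components of `λ` at index sets with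
at least `|J|` elements, multiplied by signs and integral structure constants (the `ψ`-part) or
multiplied on the right by a generator `x_j` (the `φ`-part, which draws from `J ∪ {j}`). By the
ultrametric inequality it therefore suffices to show `‖u x_j‖_r ≤ r ‖u‖_r`. This follows from the
straightening of a PBW monomial: `x^α x_j = x^{α + e_j} + v`, where `v` is a combination with
coefficients of norm `≤ 1` of monomials of degree `≤ |α|`. It is proved by induction on `|α|`:
if some `x_m` with `m > j` occurs in `x^α = x^β x_m`, then `x_m x_j = x_j x_m + Σ_k c_{mjk} x_k`
and `|c_{mjk}| ≤ 1` reduce it to monomials of degree `|β| = |α| - 1`.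
-/

open scoped NNReal

/-- The PBW-norm `‖Σ_α d_α X^α‖_r = sup_α ‖d_α‖ r^{|α|}` on the universal enveloping
algebra, expressed via a PBW basis `b` indexed by multi-indices `α : Fin d →₀ ℕ`. -/
noncomputable def pbwNorm {L : Type*} [NontriviallyNormedField L] {𝔤 : Type*}
    [LieRing 𝔤] [LieAlgebra L 𝔤] {d : ℕ}
    (b : Module.Basis (Fin d →₀ ℕ) L (UniversalEnvelopingAlgebra L 𝔤)) (r : ℝ≥0)
    (u : UniversalEnvelopingAlgebra L 𝔤) : ℝ≥0 :=
  (b.repr u).support.sup fun α => ‖b.repr u α‖₊ * r ^ (α.sum fun _ n => n)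

/-- The Chevalley–Eilenberg complex `U^• = U(𝔤) ⊗ Λ^•𝔤`, modelled as functions `I ↦ u_I` on
index sets `I ⊆ {1,…,d}` (so that `λ = Σ_q Σ_{I ∈ I_q} u_I ⊗ x_I`). -/
abbrev CEModel (L : Type*) [NontriviallyNormedField L] (𝔤 : Type*) [LieRing 𝔤]
    [LieAlgebra L 𝔤] (d : ℕ) : Type _ :=
  Finset (Fin d) → UniversalEnvelopingAlgebra L 𝔤

/-- The norm `‖Σ_q Σ_{I∈I_q} u_I ⊗ x_I‖_r = sup_q r^q sup_{I∈I_q} ‖u_I‖_r` on `U^•`. -/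
noncomputable def ceNorm {L : Type*} [NontriviallyNormedField L] {𝔤 : Type*} [LieRing 𝔤]
    [LieAlgebra L 𝔤] {d : ℕ}
    (b : Module.Basis (Fin d →₀ ℕ) L (UniversalEnvelopingAlgebra L 𝔤)) (r : ℝ≥0)
    (l : CEModel L 𝔤 d) : ℝ≥0 :=
  Finset.univ.sup fun I : Finset (Fin d) => r ^ I.card * pbwNorm b r (l I)

/-- The Chevalley–Eilenberg differential `∂ = ψ + φ`, written out in components with respect
to the basis `x_I` of `Λ^•𝔤`:
`φ(u ⊗ x_{i_1}∧…∧x_{i_q}) = Σ_s (−1)^{s+1} u·x_{i_s} ⊗ (omit s)` and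
`ψ(u ⊗ x_{i_1}∧…∧x_{i_q}) = Σ_{s<t} (−1)^{s+t} u ⊗ [x_{i_s},x_{i_t}]∧(omit s,t)`, where the
bracket is expanded via the structure constants `c_{stk} = (bg.repr ⁅x_s, x_t⁆) k` and the
wedge `x_k ∧ x_{I∖{s,t}}` is rewritten in terms of the ordered basis (with its sign, and
vanishing when `k ∈ I∖{s,t}`). -/
noncomputable def ceDiff {L : Type*} [NontriviallyNormedField L] {𝔤 : Type*} [LieRing 𝔤]
    [LieAlgebra L 𝔤] {d : ℕ} (bg : Module.Basis (Fin d) L 𝔤)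
    (l : CEModel L 𝔤 d) : CEModel L 𝔤 d := fun J =>
  -- the φ-part
  (∑ j : Fin d, if j ∈ J then 0 else
    ((-1 : L) ^ (J.filter (· < j)).card) •
      (l (insert j J) * (UniversalEnvelopingAlgebra.ι L (bg j) : UniversalEnvelopingAlgebra L 𝔤)))
  +
  -- the ψ-part
  ∑ k : Fin d, if k ∈ J then
    ∑ s : Fin d, ∑ t : Fin d,
      if s < t ∧ s ∉ J.erase k ∧ t ∉ J.erase k then
        (((-1 : L) ^ ((((insert s (insert t (J.erase k))).filter (· < s)).card + 1)
              + (((insert s (insert t (J.erase k))).filter (· < t)).card + 1)))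
          * bg.repr ⁅bg s, bg t⁆ k
          * (-1 : L) ^ (((J.erase k)).filter (· < k)).card) •
            l (insert s (insert t (J.erase k)))
      else 0
  else 0

open UniversalEnvelopingAlgebra

theorem List.prod_map_mul_eq_prod_map_update {M ι : Type*} [Monoid M] [LinearOrder ι]
    {l : List ι} (hl : l.Pairwise (· < ·)) {j : ι} (hj : j ∈ l) {f : ι → M}
    (hf : ∀ i ∈ l, j < i → f i = 1) (x : M) :
    (l.map f).prod * x = (l.map (Function.update f j (f j * x))).prod := by
  induction l with
  | nil => simp at hj
  | cons a l ih =>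
    rw [List.pairwise_cons] at hl
    obtain rfl | hj := List.mem_cons.mp hj
    · have hone : ∀ i ∈ l, f i = 1 := fun i hi => hf i (by simp [hi]) (hl.1 i hi)
      have hprod : (l.map f).prod = 1 := List.prod_eq_one (by simpa using hone)
      have hprod' : (l.map (Function.update f j (f j * x))).prod = 1 :=
        List.prod_eq_one (by simpa using fun i hi =>
          (Function.update_of_ne (hl.1 i hi).ne' _ _).trans (hone i hi))
      simp [hprod, hprod']
    · have hupd : Function.update f j (f j * x) a = f a :=
        Function.update_of_ne (hl.1 j hj).ne _ _
      rw [List.map_cons, List.map_cons, List.prod_cons, List.prod_cons, hupd, mul_assoc,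
        ih hl.2 hj fun i hi => hf i (by simp [hi])]

theorem Module.Basis.mul_eq_sum_repr_smul_mul {ι R A : Type*} [CommSemiring R] [Semiring A]
    [Algebra R A] (b : Module.Basis ι R A) (u x : A) :
    u * x = ∑ γ ∈ (b.repr u).support, b.repr u γ • (b γ * x) := by
  conv_lhs => rw [← b.linearCombination_repr u]
  simp [Finsupp.linearCombination_apply, Finsupp.sum, Finset.sum_mul]

theorem Finsupp.exists_eq_add_single_of_lt_of_ne_zero {σ : Type*} [LinearOrder σ]
    {α : σ →₀ ℕ} {i j : σ} (hji : j < i) (hi : α i ≠ 0) :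
    ∃ β m, j < m ∧ (∀ k, m < k → β k = 0) ∧ α = β + Finsupp.single m 1 := by
  have hne : α.support.Nonempty := ⟨i, Finsupp.mem_support_iff.2 hi⟩
  set m := α.support.max' hne
  have hαm : 1 ≤ α m :=
    Nat.one_le_iff_ne_zero.2 (Finsupp.mem_support_iff.1 (α.support.max'_mem hne))
  have htop : ∀ k, m < k → α k = 0 := fun k hk =>
    Finsupp.notMem_support_iff.1 fun hmem => (α.support.le_max' k hmem).not_gt hk
  refine ⟨α - Finsupp.single m 1, m,
    hji.trans_le (α.support.le_max' i (Finsupp.mem_support_iff.2 hi)),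
    fun k hk => by simp [htop k hk],
    (tsub_add_cancel_of_le (Finsupp.single_le_iff.2 hαm)).symm⟩

section PBW

variable {L : Type*} [NontriviallyNormedField L] {𝔤 : Type*} [LieRing 𝔤] [LieAlgebra L 𝔤]
  {d : ℕ} {bg : Module.Basis (Fin d) L 𝔤}
  {b : Module.Basis (Fin d →₀ ℕ) L (UniversalEnvelopingAlgebra L 𝔤)}

variable (bg b) in
def IsPBWBasis : Prop :=
  ∀ α : Fin d →₀ ℕ, b α = ((List.finRange d).map fun i =>
    (ι L (bg i) : UniversalEnvelopingAlgebra L 𝔤) ^ α i).prod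

theorem IsPBWBasis.basis_mul_ι_of_forall_lt (hb : IsPBWBasis bg b) {α : Fin d →₀ ℕ}
    {j : Fin d} (h : ∀ i, j < i → α i = 0) :
    b α * ι L (bg j) = b (α + Finsupp.single j 1) := by
  have hexp : (fun i => (ι L (bg i) : UniversalEnvelopingAlgebra L 𝔤) ^
        (α + Finsupp.single j 1 : Fin d →₀ ℕ) i) =
      Function.update (fun i => ι L (bg i) ^ α i) j (ι L (bg j) ^ α j * ι L (bg j)) := by
    funext i
    rcases eq_or_ne i j with rfl | hij
    · simp [pow_succ]
    · simp [hij]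
  rw [hb, hb, hexp]
  exact List.prod_map_mul_eq_prod_map_update (List.pairwise_lt_finRange d)
    (List.mem_finRange j) (fun i _ hi => by simp [h i hi]) _

theorem pbwNorm_le_iff {r C : ℝ≥0} {u : UniversalEnvelopingAlgebra L 𝔤} :
    pbwNorm b r u ≤ C ↔ ∀ α, ‖b.repr u α‖₊ * r ^ α.degree ≤ C := by
  refine ⟨fun h α => ?_, fun h => Finset.sup_le fun α _ => h α⟩
  by_cases hα : α ∈ (b.repr u).support
  · exact (Finset.le_sup (f := fun α => ‖b.repr u α‖₊ * r ^ α.degree) hα).trans h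
  · simp [Finsupp.notMem_support_iff.mp hα]

theorem nnnorm_repr_mul_le_pbwNorm (r : ℝ≥0) (u : UniversalEnvelopingAlgebra L 𝔤)
    (α : Fin d →₀ ℕ) : ‖b.repr u α‖₊ * r ^ α.degree ≤ pbwNorm b r u :=
  pbwNorm_le_iff.1 le_rfl α

@[simp]
theorem pbwNorm_zero (r : ℝ≥0) : pbwNorm b r 0 = 0 := by
  simp [pbwNorm]

theorem pbwNorm_smul_le (r : ℝ≥0) (c : L) (u : UniversalEnvelopingAlgebra L 𝔤) :
    pbwNorm b r (c • u) ≤ ‖c‖₊ * pbwNorm b r u :=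
  pbwNorm_le_iff.2 fun α => by
    rw [map_smul, Finsupp.smul_apply, smul_eq_mul, nnnorm_mul, mul_assoc]
    exact mul_le_mul_right (nnnorm_repr_mul_le_pbwNorm r u α) _

theorem pbwNorm_smul_le_of_nnnorm_le_one (r : ℝ≥0) {c : L} (hc : ‖c‖₊ ≤ 1)
    (u : UniversalEnvelopingAlgebra L 𝔤) : pbwNorm b r (c • u) ≤ pbwNorm b r u :=
  (pbwNorm_smul_le r c u).trans (mul_le_of_le_one_left' hc)

section Ultrametric

variable [IsUltrametricDist L]

theorem pbwNorm_add_le {r C : ℝ≥0} {u v : UniversalEnvelopingAlgebra L 𝔤}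
    (hu : pbwNorm b r u ≤ C) (hv : pbwNorm b r v ≤ C) : pbwNorm b r (u + v) ≤ C :=
  pbwNorm_le_iff.2 fun α => by
    rw [map_add, Finsupp.add_apply]
    calc ‖b.repr u α + b.repr v α‖₊ * r ^ α.degree
        ≤ max ‖b.repr u α‖₊ ‖b.repr v α‖₊ * r ^ α.degree :=
          mul_le_mul_left (IsUltrametricDist.nnnorm_add_le_max _ _) _
      _ = max (‖b.repr u α‖₊ * r ^ α.degree) (‖b.repr v α‖₊ * r ^ α.degree) :=
          max_mul_of_nonneg _ _ zero_le
      _ ≤ C := max_le (pbwNorm_le_iff.1 hu α) (pbwNorm_le_iff.1 hv α)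

theorem pbwNorm_sum_le {ι : Type*} {r C : ℝ≥0} {s : Finset ι}
    {f : ι → UniversalEnvelopingAlgebra L 𝔤} (h : ∀ i ∈ s, pbwNorm b r (f i) ≤ C) :
    pbwNorm b r (∑ i ∈ s, f i) ≤ C := by
  classical
  induction s using Finset.induction_on with
  | empty => simp
  | insert i s hi ih =>
    rw [Finset.sum_insert hi]
    exact pbwNorm_add_le (h i (s.mem_insert_self i))
      (ih fun i hi => h i (Finset.mem_insert_of_mem hi))

variable (b) in
def integralPBW (n : ℕ) : AddSubgroup (UniversalEnvelopingAlgebra L 𝔤) where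
  carrier := {u | ∀ γ, ‖b.repr u γ‖₊ ≤ 1 ∧ (b.repr u γ ≠ 0 → γ.degree ≤ n)}
  zero_mem' γ := by simp
  add_mem' {u v} hu hv γ := by
    rw [map_add, Finsupp.add_apply]
    refine ⟨(IsUltrametricDist.nnnorm_add_le_max _ _).trans (max_le (hu γ).1 (hv γ).1),
      fun hne => ?_⟩
    by_cases h : b.repr u γ = 0
    · exact (hv γ).2 (by simpa [h] using hne)
    · exact (hu γ).2 h
  neg_mem' {u} hu γ := by simpa using hu γ

theorem integralPBW_mono {m n : ℕ} (h : m ≤ n) : integralPBW b m ≤ integralPBW b n :=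
  fun _ hu γ => ⟨(hu γ).1, fun hne => ((hu γ).2 hne).trans h⟩

theorem smul_mem_integralPBW {n : ℕ} {c : L} (hc : ‖c‖₊ ≤ 1)
    {u : UniversalEnvelopingAlgebra L 𝔤} (hu : u ∈ integralPBW b n) :
    c • u ∈ integralPBW b n := fun γ => by
  rw [map_smul, Finsupp.smul_apply, smul_eq_mul, nnnorm_mul]
  exact ⟨mul_le_one' hc (hu γ).1, fun hne => (hu γ).2 (right_ne_zero_of_mul hne)⟩

theorem basis_mem_integralPBW {n : ℕ} {γ : Fin d →₀ ℕ} (h : γ.degree ≤ n) :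
    b γ ∈ integralPBW b n := fun δ => by
  rcases eq_or_ne γ δ with rfl | hne
  · simp [h]
  · simp [hne]

theorem pbwNorm_le_of_mem_integralPBW {r : ℝ≥0} (hr : 1 ≤ r) {n : ℕ}
    {u : UniversalEnvelopingAlgebra L 𝔤} (hu : u ∈ integralPBW b n) :
    pbwNorm b r u ≤ r ^ n :=
  pbwNorm_le_iff.2 fun α => by
    by_cases h : b.repr u α = 0
    · simp [h]
    · simpa using mul_le_mul' (hu α).1 (pow_le_pow_right' hr ((hu α).2 h))

theorem basis_mul_ι_mem_integralPBW_of_sub_mem {γ : Fin d →₀ ℕ} {j : Fin d}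
    (h : b γ * ι L (bg j) - b (γ + Finsupp.single j 1) ∈ integralPBW b γ.degree) :
    b γ * ι L (bg j) ∈ integralPBW b (γ.degree + 1) := by
  have hlead : b (γ + Finsupp.single j 1) ∈ integralPBW b (γ.degree + 1) :=
    basis_mem_integralPBW (by simp)
  simpa using add_mem hlead (integralPBW_mono (Nat.le_succ _) h)

theorem mul_ι_mem_integralPBW {n : ℕ}
    (hstraight : ∀ γ : Fin d →₀ ℕ, γ.degree ≤ n → ∀ j,
      b γ * ι L (bg j) - b (γ + Finsupp.single j 1) ∈ integralPBW b γ.degree)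
    {u : UniversalEnvelopingAlgebra L 𝔤} (hu : u ∈ integralPBW b n) (j : Fin d) :
    u * ι L (bg j) ∈ integralPBW b (n + 1) := by
  rw [b.mul_eq_sum_repr_smul_mul]
  refine sum_mem fun γ hγ => smul_mem_integralPBW (hu γ).1 ?_
  have hdeg : γ.degree ≤ n := (hu γ).2 (Finsupp.mem_support_iff.1 hγ)
  exact integralPBW_mono (by omega)
    (basis_mul_ι_mem_integralPBW_of_sub_mem (hstraight γ hdeg j))

theorem basis_add_single_mul_ι_sub_mem_integralPBW
    (hint : ∀ i j k, ‖bg.repr ⁅bg i, bg j⁆ k‖ ≤ 1) (hb : IsPBWBasis bg b)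
    {β : Fin d →₀ ℕ} {m j : Fin d} (hβ : ∀ i, m < i → β i = 0) (hjm : j < m)
    (hstraight : ∀ γ : Fin d →₀ ℕ, γ.degree ≤ β.degree → ∀ k,
      b γ * ι L (bg k) - b (γ + Finsupp.single k 1) ∈ integralPBW b γ.degree) :
    b (β + Finsupp.single m 1) * ι L (bg j) - b (β + Finsupp.single m 1 + Finsupp.single j 1)
      ∈ integralPBW b (β.degree + 1) := by
  set x : Fin d → UniversalEnvelopingAlgebra L 𝔤 := fun i => ι L (bg i)
  set c : Fin d → L := fun k => bg.repr ⁅bg m, bg j⁆ k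
  have hcomm : x m * x j = x j * x m + ∑ k, c k • x k := by
    have hbracket : ι L ⁅bg m, bg j⁆ = ∑ k, c k • x k := by
      conv_lhs => rw [← bg.sum_repr ⁅bg m, bg j⁆]
      simp only [map_sum, map_smul, x, c]
    let _ : LieRing (UniversalEnvelopingAlgebra L 𝔤) := LieRing.ofAssociativeRing
    rw [← hbracket, LieHom.map_lie, Ring.lie_def]
    abel
  have hlead :
      b (β + Finsupp.single j 1) * x m = b (β + Finsupp.single m 1 + Finsupp.single j 1) := by
    rw [hb.basis_mul_ι_of_forall_lt, add_right_comm]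
    intro i hi
    simp [hβ i hi, (hjm.trans hi).ne]
  have hsplit :
      b (β + Finsupp.single m 1) * x j - b (β + Finsupp.single m 1 + Finsupp.single j 1) =
        (b β * x j - b (β + Finsupp.single j 1)) * x m + ∑ k, c k • (b β * x k) := by
    rw [← hb.basis_mul_ι_of_forall_lt hβ, mul_assoc, hcomm, ← hlead]
    simp only [mul_add, sub_mul, Finset.mul_sum, mul_smul_comm, mul_assoc]
    abel
  rw [hsplit]
  refine add_mem (mul_ι_mem_integralPBW hstraight (hstraight β le_rfl j) m)
    (sum_mem fun k _ => smul_mem_integralPBW ?_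
      (basis_mul_ι_mem_integralPBW_of_sub_mem (hstraight β le_rfl k)))
  simpa [← NNReal.coe_le_coe] using hint m j k

theorem basis_mul_ι_sub_mem_integralPBW
    (hint : ∀ i j k, ‖bg.repr ⁅bg i, bg j⁆ k‖ ≤ 1) (hb : IsPBWBasis bg b)
    (α : Fin d →₀ ℕ) (j : Fin d) :
    b α * ι L (bg j) - b (α + Finsupp.single j 1) ∈ integralPBW b α.degree := by
  induction hn : α.degree using Nat.strong_induction_on generalizing α j with
  | _ n ih =>
  by_cases hord : ∀ i, j < i → α i = 0
  · rw [hb.basis_mul_ι_of_forall_lt hord, sub_self]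
    exact zero_mem _
  push Not at hord
  obtain ⟨i, hji, hi⟩ := hord
  obtain ⟨β, m, hjm, hβ, rfl⟩ := Finsupp.exists_eq_add_single_of_lt_of_ne_zero hji hi
  have hdeg : (β + Finsupp.single m 1).degree = β.degree + 1 := by simp
  rw [← hn, hdeg]
  exact basis_add_single_mul_ι_sub_mem_integralPBW hint hb hβ hjm
    fun γ hγ k => ih γ.degree (by omega) γ k rfl

theorem pbwNorm_mul_ι_le
    (hint : ∀ i j k, ‖bg.repr ⁅bg i, bg j⁆ k‖ ≤ 1) (hb : IsPBWBasis bg b)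
    {r : ℝ≥0} (hr : 1 ≤ r) (u : UniversalEnvelopingAlgebra L 𝔤) (j : Fin d) :
    pbwNorm b r (u * ι L (bg j)) ≤ r * pbwNorm b r u := by
  rw [b.mul_eq_sum_repr_smul_mul]
  refine pbwNorm_sum_le fun γ _ => ?_
  have hγ : pbwNorm b r (b γ * ι L (bg j)) ≤ r ^ (γ.degree + 1) :=
    pbwNorm_le_of_mem_integralPBW hr (basis_mul_ι_mem_integralPBW_of_sub_mem
      (basis_mul_ι_sub_mem_integralPBW hint hb γ j))
  calc pbwNorm b r (b.repr u γ • (b γ * ι L (bg j)))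
      ≤ ‖b.repr u γ‖₊ * r ^ (γ.degree + 1) := (pbwNorm_smul_le r _ _).trans (by gcongr)
    _ = r * (‖b.repr u γ‖₊ * r ^ γ.degree) := by ring
    _ ≤ r * pbwNorm b r u := by gcongr; exact nnnorm_repr_mul_le_pbwNorm r u γ

end Ultrametric

theorem pow_card_mul_pbwNorm_le_ceNorm (r : ℝ≥0) (l : CEModel L 𝔤 d) (I : Finset (Fin d)) :
    r ^ I.card * pbwNorm b r (l I) ≤ ceNorm b r l :=
  Finset.le_sup (f := fun I => r ^ I.card * pbwNorm b r (l I)) (Finset.mem_univ I)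

theorem pbwNorm_smul_le_ceNorm_div {r : ℝ≥0} (hr : 1 ≤ r) (l : CEModel L 𝔤 d)
    {J K : Finset (Fin d)} (hJK : J.card ≤ K.card) {c : L} (hc : ‖c‖₊ ≤ 1) :
    pbwNorm b r (c • l K) ≤ ceNorm b r l / r ^ J.card := by
  rw [le_div_iff₀' (pow_pos (zero_lt_one.trans_le hr) _)]
  calc r ^ J.card * pbwNorm b r (c • l K) ≤ r ^ K.card * pbwNorm b r (l K) :=
        mul_le_mul' (pow_le_pow_right' hr hJK) (pbwNorm_smul_le_of_nnnorm_le_one r hc _)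
    _ ≤ ceNorm b r l := pow_card_mul_pbwNorm_le_ceNorm r l K

theorem pbwNorm_smul_mul_ι_le_ceNorm_div [IsUltrametricDist L]
    (hint : ∀ i j k, ‖bg.repr ⁅bg i, bg j⁆ k‖ ≤ 1) (hb : IsPBWBasis bg b)
    {r : ℝ≥0} (hr : 1 ≤ r) (l : CEModel L 𝔤 d) {J : Finset (Fin d)} {j : Fin d}
    (hj : j ∉ J) {c : L} (hc : ‖c‖₊ ≤ 1) :
    pbwNorm b r (c • (l (insert j J) * ι L (bg j))) ≤ ceNorm b r l / r ^ J.card := by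
  rw [le_div_iff₀' (pow_pos (zero_lt_one.trans_le hr) _)]
  calc r ^ J.card * pbwNorm b r (c • (l (insert j J) * ι L (bg j)))
      ≤ r ^ J.card * (r * pbwNorm b r (l (insert j J))) := by
        gcongr
        exact (pbwNorm_smul_le_of_nnnorm_le_one r hc _).trans (pbwNorm_mul_ι_le hint hb hr _ j)
    _ = r ^ (insert j J).card * pbwNorm b r (l (insert j J)) := by
        rw [Finset.card_insert_of_notMem hj, pow_succ, mul_assoc]
    _ ≤ ceNorm b r l := pow_card_mul_pbwNorm_le_ceNorm r l _

end PBW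

theorem ceDiff_norm_decreasing_general
    (L : Type*) [NontriviallyNormedField L] [IsUltrametricDist L]
    (𝔤 : Type*) [LieRing 𝔤] [LieAlgebra L 𝔤] {d : ℕ}
    (bg : Module.Basis (Fin d) L 𝔤)
    (hint : ∀ i j k, ‖bg.repr ⁅bg i, bg j⁆ k‖ ≤ 1)
    (b : Module.Basis (Fin d →₀ ℕ) L (UniversalEnvelopingAlgebra L 𝔤))
    (hb : ∀ α : Fin d →₀ ℕ,
      b α = ((List.finRange d).map fun i =>
        (UniversalEnvelopingAlgebra.ι L (bg i) : UniversalEnvelopingAlgebra L 𝔤) ^ α i).prod)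
    (r : ℝ≥0) (hr : 1 < r) (l : CEModel L 𝔤 d) :
    ceNorm b r (ceDiff bg l) ≤ ceNorm b r l := by
  refine Finset.sup_le fun J _ => ?_
  rw [← le_div_iff₀' (pow_pos (zero_lt_one.trans hr) _)]
  refine pbwNorm_add_le (pbwNorm_sum_le fun j _ => ?_) (pbwNorm_sum_le fun k _ => ?_)
  · split_ifs with hj
    · simp
    · exact pbwNorm_smul_mul_ι_le_ceNorm_div hint hb hr.le l hj (by simp)
  · split_ifs with hk
    · refine pbwNorm_sum_le fun s _ => pbwNorm_sum_le fun t _ => ?_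
      split_ifs with hst
      · have hcard : J.card ≤ (insert s (insert t (J.erase k))).card :=
          calc J.card = (insert t (J.erase k)).card := by
                rw [Finset.card_insert_of_notMem hst.2.2, Finset.card_erase_add_one hk]
            _ ≤ _ := Finset.card_le_card (Finset.subset_insert _ _)
        refine pbwNorm_smul_le_ceNorm_div hr.le l hcard ?_
        simpa [← NNReal.coe_le_coe] using hint s t k
      · simp
    · simp

/-- the Chevalley–Eilenberg differential `∂ = ψ + φ` is norm-decreasing:
`‖∂λ‖_r ≤ ‖λ‖_r` for all `λ ∈ U^•` and all `r > 1`, the basis having integral structure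
constants. -/
theorem ceDiff_norm_decreasing {p : ℕ} [Fact (Nat.Prime p)]
    (L : Type*) [NontriviallyNormedField L] [NormedAlgebra ℚ_[p] L]
    [FiniteDimensional ℚ_[p] L] [IsUltrametricDist L]
    (𝔤 : Type*) [LieRing 𝔤] [LieAlgebra L 𝔤] {d : ℕ}
    (bg : Module.Basis (Fin d) L 𝔤)
    (hint : ∀ i j k, ‖bg.repr ⁅bg i, bg j⁆ k‖ ≤ 1)
    (b : Module.Basis (Fin d →₀ ℕ) L (UniversalEnvelopingAlgebra L 𝔤))
    (hb : ∀ α : Fin d →₀ ℕ,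
      b α = ((List.finRange d).map fun i =>
        (UniversalEnvelopingAlgebra.ι L (bg i) : UniversalEnvelopingAlgebra L 𝔤) ^ α i).prod)
    (r : ℝ≥0) (hr : 1 < r) (l : CEModel L 𝔤 d) :
    ceNorm b r (ceDiff bg l) ≤ ceNorm b r l :=
  ceDiff_norm_decreasing_general L 𝔤 bg hint b hb r hr l
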